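/- arXiv:2404.09184 — 8 statements merged into one kernel-verified Lean document; each statement's English description precedes it below -/
import Mathlib

section
/- Let $k$ be a field and $(R, m)$ a local $k$-algebra such that the composition $k \hookrightarrow R \to R/m$ is an isomorphism. Then a $k$-linear map $\phi : R \to R/m$ is a differential operator if and only if it is continuous in the $m$-adic topology, i.e., $\phi(m^n) = 0$ for some $n \in \mathbb{N}$. Moreover, if $\phi(m^n) = 0$ then $\phi$ has order at most $n-1$. -/
def IsDiffOp (S : Type*) [CommSemiring S] {N M : Type*} [AddCommGroup N] [AddCommGroup M]
    [Module S N] [Module S M] : ℕ → (N → M) → Prop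
  | 0, φ => ∃ ψ : N →ₗ[S] M, ∀ x, φ x = ψ x
  | n + 1, φ => ∀ s : S, IsDiffOp S n (fun x => φ (s • x) - s • φ x)

open IsLocalRing

section Aux

variable {k R : Type*} [Field k] [CommRing R] [Algebra k R] [IsLocalRing R]

instance auxTower : IsScalarTower k R (ResidueField R) :=
  IsScalarTower.of_algebraMap_eq (fun _ => rfl)

instance auxComm : SMulCommClass R k (ResidueField R) :=
  ⟨fun s c v => by
    rw [Algebra.smul_def s, Algebra.smul_def c, Algebra.smul_def s, Algebra.smul_def c,
      mul_left_comm]⟩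

lemma smul_res_zero {t : R} (ht : t ∈ maximalIdeal R) (v : ResidueField R) : t • v = 0 := by
  rw [Algebra.smul_def]
  have : algebraMap R (ResidueField R) t = 0 := Ideal.Quotient.eq_zero_iff_mem.2 ht
  rw [this, zero_mul]

lemma decomp (hres : Function.Surjective (algebraMap k (ResidueField R))) (s : R) :
    ∃ c : k, s - algebraMap k R c ∈ maximalIdeal R := by
  obtain ⟨c, hc⟩ := hres (residue R s)
  refine ⟨c, Ideal.Quotient.eq_zero_iff_mem.mp ?_⟩
  show residue R (s - algebraMap k R c) = 0
  rw [map_sub, show residue R (algebraMap k R c) = algebraMap k (ResidueField R) c from rfl,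
    hc, sub_self]

lemma killsPow : ∀ (n : ℕ) (φ : R → ResidueField R),
    (∀ x y, φ (x + y) = φ x + φ y) → IsDiffOp R n φ →
    ∀ x ∈ (maximalIdeal R) ^ (n + 1), φ x = 0 := by
  intro n
  induction n with
  | zero =>
    intro φ hadd hφ x hx
    obtain ⟨ψ, hψ⟩ := hφ
    rw [pow_one] at hx
    rw [hψ, show x = x • (1 : R) by simp, map_smul, smul_res_zero hx]
  | succ n ih =>
    intro φ hadd hφ x hx
    rw [pow_succ] at hx
    refine Submodule.mul_induction_on hx ?_ ?_
    · intro a ha b hb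
      have hcadd : ∀ x y : R, (φ (b • (x + y)) - b • φ (x + y)) =
          (φ (b • x) - b • φ x) + (φ (b • y) - b • φ y) := by
        intro x y
        rw [smul_add, hadd, hadd, smul_add]
        ring
      have hc := ih (fun x => φ (b • x) - b • φ x) hcadd (hφ b) a ha
      rw [show a * b = b • a by rw [smul_eq_mul, mul_comm], sub_eq_zero.mp hc,
        smul_res_zero hb]
    · intro a b ha hb
      rw [hadd, ha, hb, add_zero]

lemma contToDiffOp (hres : Function.Surjective (algebraMap k (ResidueField R))) :
    ∀ (n : ℕ) (φ : R → ResidueField R),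
    (∀ x y, φ (x + y) = φ x + φ y) →
    (∀ (c : k) (x : R), φ (algebraMap k R c * x) = c • φ x) →
    (∀ x ∈ (maximalIdeal R) ^ (n + 1), φ x = 0) →
    IsDiffOp R n φ := by
  intro n
  induction n with
  | zero =>
    intro φ hadd hk hkill
    refine ⟨{ toFun := φ, map_add' := hadd, map_smul' := ?_ }, fun x => rfl⟩
    intro s x
    obtain ⟨c, ht⟩ := decomp hres s
    set t := s - algebraMap k R c with htdef
    have hs : s = algebraMap k R c + t := by rw [htdef]; ring
    have htx : t * x ∈ (maximalIdeal R) ^ (0 + 1) := by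
      simpa using Ideal.mul_mem_right x _ ht
    have h1 : φ (s * x) = c • φ x := by
      rw [hs, add_mul, hadd, hk, hkill (t * x) htx, add_zero]
    have h2 : s • φ x = c • φ x := by
      rw [hs, add_smul, smul_res_zero ht, add_zero, algebraMap_smul]
    simp only [smul_eq_mul, RingHom.id_apply, h1, h2]
  | succ n ih =>
    intro φ hadd hk hkill s
    obtain ⟨c, ht⟩ := decomp hres s
    set t := s - algebraMap k R c with htdef
    have hs : s = algebraMap k R c + t := by rw [htdef]; ring
    apply ih
    · intro x y
      simp only [smul_add, hadd]
      ring
    · intro c' x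
      simp only [smul_eq_mul]
      have h1 : s * (algebraMap k R c' * x) = algebraMap k R c' * (s * x) := by ring
      rw [h1, hk, hk, smul_sub, smul_comm]
    · intro x hx
      simp only [smul_eq_mul]
      have htx : t * x ∈ (maximalIdeal R) ^ (n + 1 + 1) := by
        rw [pow_succ, mul_comm]
        exact Ideal.mul_mem_mul ht hx
      have h1 : φ (s * x) = c • φ x := by
        rw [hs, add_mul, hadd, hk, hkill (t * x) htx, add_zero]
      have h2 : s • φ x = c • φ x := by
        rw [hs, add_smul, smul_res_zero ht, add_zero, algebraMap_smul]
      rw [h1, h2, sub_self]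

end Aux

/-- for a local `k`-algebra `(R,m)` with `k ≅ R/m`, a `k`-linear map
`φ : R → R/m` is a differential operator iff it is `m`-adically continuous, i.e. kills
some power of `m`; moreover if `φ (m^n) = 0` then `φ` has order at most `n - 1`. -/
theorem stmt1 {k R : Type*} [Field k] [CommRing R] [Algebra k R] [IsLocalRing R]
    (hres : Function.Bijective (algebraMap k (IsLocalRing.ResidueField R)))
    (φ : R →ₗ[k] IsLocalRing.ResidueField R) :
    ((∃ n, IsDiffOp R n ⇑φ) ↔ ∃ n : ℕ, ∀ x ∈ (IsLocalRing.maximalIdeal R) ^ n, φ x = 0) ∧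
    (∀ n : ℕ, (∀ x ∈ (IsLocalRing.maximalIdeal R) ^ n, φ x = 0) →
      IsDiffOp R (n - 1) ⇑φ) := by
  have hksmul : ∀ (c : k) (x : R), φ (algebraMap k R c * x) = c • φ x := by
    intro c x
    rw [← Algebra.smul_def, map_smul]
  have hsec : ∀ n : ℕ, (∀ x ∈ (IsLocalRing.maximalIdeal R) ^ n, φ x = 0) →
      IsDiffOp R (n - 1) ⇑φ := by
    intro n hkill
    match n with
    | 0 =>
      refine ⟨0, fun x => ?_⟩
      simpa using hkill x (by simp)
    | n + 1 =>
      simpa using contToDiffOp hres.surjective n ⇑φ (map_add φ) hksmul hkill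
  refine ⟨⟨?_, ?_⟩, hsec⟩
  · rintro ⟨n, hn⟩
    exact ⟨n + 1, killsPow n ⇑φ (map_add φ) hn⟩
  · rintro ⟨n, hn⟩
    exact ⟨n - 1, hsec n hn⟩
end

section
/- Let $k$ be a field and $(R, m)$ a local $k$-algebra. The set $\mathcal{M}_R = \{x \in R \mid \delta(x) \in m \text{ for all } \delta \in D_k(R)\}$ is a proper ideal of $R$, is a $D_k(R)$-submodule of $R$, and contains every proper $D_k(R)$-submodule of $R$. In particular, $R$ is simple as a $D_k(R)$-module if and only if $\mathcal{M}_R = 0$. -/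
/-- The set of `k`-linear differential operators on `R` (of some finite order),
viewed as a set of functions `R → R`. -/
def DiffOps (k R : Type*) [CommRing k] [CommRing R] [Algebra k R] : Set (R → R) :=
  {δ | IsLinearMap k δ ∧ ∃ n, IsDiffOp R n δ}

namespace IsDiffOp

variable {S : Type*} [CommSemiring S] {N M P : Type*} [AddCommGroup N] [AddCommGroup M]
  [AddCommGroup P] [Module S N] [Module S M] [Module S P]

theorem add {n : ℕ} {φ χ : N → M} (hφ : IsDiffOp S n φ) (hχ : IsDiffOp S n χ) :
    IsDiffOp S n (φ + χ) := by
  induction n generalizing φ χ with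
  | zero =>
    obtain ⟨f, hf⟩ := hφ
    obtain ⟨g, hg⟩ := hχ
    exact ⟨f + g, fun x => by simp [hf, hg]⟩
  | succ n ih =>
    intro s
    convert ih (hφ s) (hχ s) using 1
    ext x
    simp only [Pi.add_apply, smul_add]
    abel

theorem linearMap_comp (f : M →ₗ[S] P) {n : ℕ} {ψ : N → M} (hψ : IsDiffOp S n ψ) :
    IsDiffOp S n (f ∘ ψ) := by
  induction n generalizing ψ with
  | zero =>
    obtain ⟨g, hg⟩ := hψ
    exact ⟨f ∘ₗ g, fun x => by simp [hg]⟩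
  | succ n ih =>
    intro s
    convert ih (hψ s) using 1
    ext x
    simp

theorem comp {m n : ℕ} {φ : M → P} {ψ : N → M} (hadd : ∀ a b, φ (a + b) = φ a + φ b)
    (hφ : IsDiffOp S m φ) (hψ : IsDiffOp S n ψ) : IsDiffOp S (m + n) (φ ∘ ψ) := by
  induction m generalizing φ ψ n with
  | zero =>
    obtain ⟨f, hf⟩ := hφ
    rw [zero_add, show φ = f from funext hf]
    exact linearMap_comp f hψ
  | succ m ihm =>
    have hadd_comm (s : S) (a b : M) :
        φ (s • (a + b)) - s • φ (a + b) = (φ (s • a) - s • φ a) + (φ (s • b) - s • φ b) := by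
      rw [smul_add, hadd, hadd, smul_add]
      abel
    induction n generalizing ψ with
    | zero =>
      obtain ⟨g, hg⟩ := id hψ
      show ∀ s, IsDiffOp S (m + 0) _
      intro s
      convert ihm (hadd_comm s) (hφ s) hψ using 1
      ext x
      simp [hg]
    | succ n ihn =>
      show ∀ s, IsDiffOp S (m + 1 + n) _
      intro s
      have hφ_sub (a b : M) : φ (a - b) = φ a - φ b := (AddMonoidHom.mk' φ hadd).map_sub a b
      have hleft := ihn (hψ s)
      have hright := ihm (hadd_comm s) (hφ s) hψ
      rw [show m + (n + 1) = m + 1 + n by omega] at hright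
      convert hleft.add hright using 1
      ext x
      simp only [Function.comp_apply, Pi.add_apply, hφ_sub]
      abel

end IsDiffOp

namespace DiffOps

variable {k R : Type*} [CommRing k] [CommRing R] [Algebra k R]

theorem id_mem : id ∈ DiffOps k R :=
  ⟨LinearMap.id.isLinear, 0, LinearMap.id, fun _ => rfl⟩

theorem mul_left_mem (r : R) : (r * ·) ∈ DiffOps k R :=
  ⟨(LinearMap.mulLeft k r).isLinear, 0, LinearMap.mulLeft R r, fun _ => rfl⟩

theorem comp_mem {δ δ' : R → R} (hδ : δ ∈ DiffOps k R) (hδ' : δ' ∈ DiffOps k R) :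
    δ ∘ δ' ∈ DiffOps k R := by
  obtain ⟨hlin, m, hm⟩ := hδ
  obtain ⟨hlin', n, hn⟩ := hδ'
  exact ⟨((hlin.mk' δ).comp (hlin'.mk' δ')).isLinear, m + n, hm.comp hlin.map_add hn⟩

end DiffOps

section DiffStable

variable (k : Type*) {R : Type*} [CommRing k] [CommRing R] [Algebra k R]

def Ideal.IsDiffStable (I : Ideal R) : Prop :=
  ∀ δ ∈ DiffOps k R, ∀ x ∈ I, δ x ∈ I

variable (R) [IsLocalRing R]

def IsLocalRing.diffMaximalIdeal : Ideal R where
  carrier := {x | ∀ δ ∈ DiffOps k R, δ x ∈ IsLocalRing.maximalIdeal R}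
  zero_mem' δ hδ := by
    rw [hδ.1.map_zero]
    exact Ideal.zero_mem _
  add_mem' hx hy δ hδ := by
    rw [hδ.1.map_add]
    exact Ideal.add_mem _ (hx δ hδ) (hy δ hδ)
  smul_mem' r _ hx δ hδ := hx _ (DiffOps.comp_mem hδ (DiffOps.mul_left_mem r))

namespace IsLocalRing

variable {k R}

theorem one_notMem_diffMaximalIdeal : (1 : R) ∉ diffMaximalIdeal k R := fun h =>
  (maximalIdeal.isMaximal R).ne_top ((Ideal.eq_top_iff_one _).mpr (h id DiffOps.id_mem))

theorem diffMaximalIdeal_ne_top : diffMaximalIdeal k R ≠ ⊤ :=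
  (Ideal.ne_top_iff_one _).mpr one_notMem_diffMaximalIdeal

theorem isDiffStable_diffMaximalIdeal : (diffMaximalIdeal k R).IsDiffStable k :=
  fun _ hδ _ hx _ hδ' => hx _ (DiffOps.comp_mem hδ' hδ)

theorem le_diffMaximalIdeal {I : Ideal R} (hI : I ≠ ⊤) (hstable : I.IsDiffStable k) :
    I ≤ diffMaximalIdeal k R :=
  fun _ hx δ hδ => le_maximalIdeal hI (hstable δ hδ _ hx)

theorem forall_isDiffStable_eq_bot_or_eq_top_iff :
    (∀ I : Ideal R, I.IsDiffStable k → I = ⊥ ∨ I = ⊤) ↔ diffMaximalIdeal k R = ⊥ := by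
  refine ⟨fun h => (h _ isDiffStable_diffMaximalIdeal).resolve_right diffMaximalIdeal_ne_top,
    fun h I hstable => ?_⟩
  by_cases hI : I = ⊤
  · exact Or.inr hI
  · exact Or.inl (le_bot_iff.mp (h ▸ le_diffMaximalIdeal hI hstable))

end IsLocalRing

end DiffStable

/-- `𝓜_R = {x | δ x ∈ m for all δ ∈ D_k(R)}` is a proper ideal which is a
`D_k(R)`-submodule of `R` containing every proper `D_k(R)`-submodule; in particular `R`
is `D_k(R)`-simple iff `𝓜_R = 0`. -/
theorem stmt3 {k R : Type*} [Field k] [CommRing R] [Algebra k R] [IsLocalRing R] :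
    let MR : Set R :=
      {x | ∀ δ ∈ DiffOps k R, δ x ∈ IsLocalRing.maximalIdeal R}
    (1 : R) ∉ MR ∧
    (∀ x ∈ MR, ∀ y ∈ MR, x + y ∈ MR) ∧
    (∀ r : R, ∀ x ∈ MR, r * x ∈ MR) ∧
    (∀ δ ∈ DiffOps k R, ∀ x ∈ MR, δ x ∈ MR) ∧
    (∀ I : Ideal R, I ≠ ⊤ → (∀ δ ∈ DiffOps k R, ∀ x ∈ I, δ x ∈ I) → (I : Set R) ⊆ MR) ∧
    ((∀ I : Ideal R, (∀ δ ∈ DiffOps k R, ∀ x ∈ I, δ x ∈ I) → I = ⊥ ∨ I = ⊤) ↔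
      MR = {0}) := by
  intro MR
  have hMR : MR = IsLocalRing.diffMaximalIdeal k R := rfl
  rw [hMR, ← Submodule.bot_coe (R := R) (M := R), SetLike.coe_set_eq]
  exact ⟨IsLocalRing.one_notMem_diffMaximalIdeal, fun _ hx _ hy => add_mem hx hy,
    fun r _ hx => Ideal.mul_mem_left _ r hx, IsLocalRing.isDiffStable_diffMaximalIdeal,
    fun _ => IsLocalRing.le_diffMaximalIdeal,
    IsLocalRing.forall_isDiffStable_eq_bot_or_eq_top_iff⟩
end

section
/- Let $k$ be a field, $g \in k[[t]]$ with $g(0)=0$ and $\frac{dg}{dt} \notin k(t,g)$, and let $V = k(t,g) \cap k[[t]]$ with maximal ideal $\mathfrak{m} = (t)$. Then the $\mathfrak{m}$-adic completion of $V$ is isomorphic to $k[[t]]$. -/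
open PowerSeries IntermediateField

/-- The ring `V = k(t,g) ∩ k[[t]]`, as a subring of the Laurent series field `k((t))`. -/
noncomputable def Vring (k : Type*) [Field k] (g : PowerSeries k) : Subring (LaurentSeries k) :=
  (IntermediateField.adjoin k
      {((PowerSeries.X : PowerSeries k) : LaurentSeries k),
        (g : LaurentSeries k)}).toSubfield.toSubring ⊓
    (HahnSeries.ofPowerSeries ℤ k).range

theorem X_mem_Vring (k : Type*) [Field k] (g : PowerSeries k) :
    ((PowerSeries.X : PowerSeries k) : LaurentSeries k) ∈ Vring k g :=
  ⟨IntermediateField.subset_adjoin _ _ (Set.mem_insert _ _), ⟨PowerSeries.X, rfl⟩⟩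

set_option synthInstance.maxHeartbeats 1000000
set_option maxHeartbeats 4000000

namespace Stmt7Aux

variable {k : Type*} [Field k] (g : PowerSeries k)

/-- The element `t` of `V`. -/
noncomputable def tV : Vring k g := ⟨_, X_mem_Vring k g⟩

/-- The maximal ideal `(t)` of `V`. -/
noncomputable def Iv : Ideal (Vring k g) := Ideal.span {tV g}

theorem algebraMap_eq (c : k) :
    algebraMap k (LaurentSeries k) c = HahnSeries.ofPowerSeries ℤ k (PowerSeries.C c) := by
  rw [HahnSeries.algebraMap_apply']
  congr 1

theorem algebraMap_mem_Vring (c : k) : algebraMap k (LaurentSeries k) c ∈ Vring k g := by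
  refine ⟨(IntermediateField.adjoin k _).algebraMap_mem c, ⟨PowerSeries.C c, ?_⟩⟩
  rw [algebraMap_eq]

/-- Constants as elements of `V`. -/
noncomputable def cV : k →+* Vring k g :=
  (algebraMap k (LaurentSeries k)).codRestrict (Vring k g) (algebraMap_mem_Vring g)

/-- Polynomials in `t` as elements of `V`. -/
noncomputable def pV : Polynomial k →+* Vring k g := Polynomial.eval₂RingHom (cV g) (tV g)

theorem coe_pV (p : Polynomial k) :
    ((pV g p : Vring k g) : LaurentSeries k) =
      HahnSeries.ofPowerSeries ℤ k (p : PowerSeries k) := by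
  have h : ((Vring k g).subtype.comp (pV g)) =
      (HahnSeries.ofPowerSeries ℤ k).comp (Polynomial.coeToPowerSeries.ringHom) := by
    apply Polynomial.ringHom_ext
    · intro a
      show ((pV g (Polynomial.C a) : Vring k g) : LaurentSeries k) = _
      have : pV g (Polynomial.C a) = cV g a := by
        simp [pV]
      rw [this]
      show algebraMap k (LaurentSeries k) a = _
      rw [algebraMap_eq]
      simp only [RingHom.coe_comp, Function.comp_apply,
        Polynomial.coeToPowerSeries.ringHom_apply, Polynomial.coe_C]
    · show ((pV g Polynomial.X : Vring k g) : LaurentSeries k) = _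
      have : pV g Polynomial.X = tV g := by
        simp [pV]
      rw [this]
      simp only [RingHom.coe_comp, Function.comp_apply,
        Polynomial.coeToPowerSeries.ringHom_apply, Polynomial.coe_X]
      rfl
  exact RingHom.congr_fun h p

theorem mem_iff (n : ℕ) (v : Vring k g) (vp : PowerSeries k)
    (hv : HahnSeries.ofPowerSeries ℤ k vp = (v : LaurentSeries k)) :
    v ∈ (Iv g ^ n • ⊤ : Submodule (Vring k g) (Vring k g)) ↔
      (PowerSeries.X : PowerSeries k) ^ n ∣ vp := by
  have hsm : (Iv g ^ n • ⊤ : Ideal (Vring k g)) = Ideal.span {tV g ^ n} := by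
    rw [smul_eq_mul, Ideal.mul_top, Iv, Ideal.span_singleton_pow]
  rw [show (Iv g ^ n • ⊤ : Submodule (Vring k g) (Vring k g)) =
    (Ideal.span {tV g ^ n} : Ideal (Vring k g)) from hsm, Ideal.mem_span_singleton]
  constructor
  · rintro ⟨u, hu⟩
    obtain ⟨up, hup⟩ := u.2.2
    refine ⟨up, HahnSeries.ofPowerSeries_injective (Γ := ℤ) (R := k) ?_⟩
    rw [hv, map_mul, map_pow, hup, hu]
    push_cast
    rfl
  · rintro ⟨up, hup⟩
    have hvL : (v : LaurentSeries k) =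
        (HahnSeries.ofPowerSeries ℤ k PowerSeries.X) ^ n *
          HahnSeries.ofPowerSeries ℤ k up := by
      rw [← hv, hup, map_mul, map_pow]
    have hXne : (HahnSeries.ofPowerSeries ℤ k PowerSeries.X) ≠ 0 := by
      intro h
      exact PowerSeries.X_ne_zero (R := k)
        (HahnSeries.ofPowerSeries_injective (by rw [h, map_zero]))
    have hXmem : ((PowerSeries.X : PowerSeries k) : LaurentSeries k) ∈
        IntermediateField.adjoin k
          {((PowerSeries.X : PowerSeries k) : LaurentSeries k), (g : LaurentSeries k)} :=
      IntermediateField.subset_adjoin _ _ (Set.mem_insert _ _)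
    have key : HahnSeries.ofPowerSeries ℤ k up =
        (v : LaurentSeries k) *
          (((PowerSeries.X : PowerSeries k) : LaurentSeries k))⁻¹ ^ n := by
      rw [hvL]
      show _ = (HahnSeries.ofPowerSeries ℤ k PowerSeries.X) ^ n *
        HahnSeries.ofPowerSeries ℤ k up *
          ((HahnSeries.ofPowerSeries ℤ k PowerSeries.X))⁻¹ ^ n
      rw [mul_comm ((HahnSeries.ofPowerSeries ℤ k PowerSeries.X) ^ n), mul_assoc, ← mul_pow,
        mul_inv_cancel₀ hXne, one_pow, mul_one]
    have humem : HahnSeries.ofPowerSeries ℤ k up ∈ Vring k g := by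
      refine ⟨?_, ⟨up, rfl⟩⟩
      rw [key]
      exact mul_mem v.2.1 (pow_mem (inv_mem hXmem) n)
    refine ⟨⟨_, humem⟩, Subtype.ext ?_⟩
    push_cast
    rw [hvL]
    rfl

theorem mk_eq_mk {n : ℕ} {v w : Vring k g} (vp wp : PowerSeries k)
    (hv : (v : LaurentSeries k) = HahnSeries.ofPowerSeries ℤ k vp)
    (hw : (w : LaurentSeries k) = HahnSeries.ofPowerSeries ℤ k wp)
    (h : ∀ m, m < n → PowerSeries.coeff m vp = PowerSeries.coeff m wp) :
    Submodule.Quotient.mk (p := (Iv g ^ n • ⊤ : Submodule (Vring k g) (Vring k g))) v =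
      Submodule.Quotient.mk w := by
  rw [Submodule.Quotient.eq]
  rw [mem_iff g n (v - w) (vp - wp) (by push_cast; rw [hv, hw])]
  rw [PowerSeries.X_pow_dvd_iff]
  intro m hm
  rw [map_sub, h m hm, sub_self]

/-- The `n`-th component of the image of a power series in the adic completion. -/
noncomputable def chiFun (f : PowerSeries k) :
    ∀ n : ℕ, Vring k g ⧸ (Iv g ^ n • ⊤ : Submodule (Vring k g) (Vring k g)) :=
  fun n => Submodule.Quotient.mk (pV g (PowerSeries.trunc n f))

theorem chi_compat (f : PowerSeries k) {m n : ℕ} (hmn : m ≤ n) :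
    AdicCompletion.transitionMap (Iv g) (Vring k g) hmn (chiFun g f n) = chiFun g f m := by
  show Submodule.Quotient.mk (pV g (PowerSeries.trunc n f)) =
    Submodule.Quotient.mk (pV g (PowerSeries.trunc m f))
  refine mk_eq_mk g _ _ (coe_pV g _) (coe_pV g _) fun j hj => ?_
  rw [PowerSeries.coeff_coe_trunc_of_lt (lt_of_lt_of_le hj hmn),
    PowerSeries.coeff_coe_trunc_of_lt hj]

/-- The comparison map `k[[t]] →+* AdicCompletion I V`. -/
noncomputable def chi : PowerSeries k →+* AdicCompletion (Iv g) (Vring k g) where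
  toFun f := ⟨chiFun g f, fun hmn => chi_compat g f hmn⟩
  map_one' := by
    apply AdicCompletion.ext
    intro n
    show chiFun g 1 n = (1 : AdicCompletion (Iv g) (Vring k g)).val n
    rw [AdicCompletion.val_one]
    show Submodule.Quotient.mk (pV g (PowerSeries.trunc n 1)) = Ideal.Quotient.mk _ 1
    rw [Ideal.Quotient.mk_eq_mk]
    refine mk_eq_mk g _ 1 (coe_pV g _) (by simp) fun j hj => ?_
    rw [PowerSeries.coeff_coe_trunc_of_lt hj]
  map_mul' f f' := by
    apply AdicCompletion.ext
    intro n
    show Submodule.Quotient.mk (pV g (PowerSeries.trunc n (f * f'))) =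
      (Ideal.Quotient.mk _ (pV g (PowerSeries.trunc n f))) *
        (Ideal.Quotient.mk _ (pV g (PowerSeries.trunc n f')))
    rw [← map_mul, Ideal.Quotient.mk_eq_mk]
    refine mk_eq_mk g _ (((PowerSeries.trunc n f : Polynomial k) : PowerSeries k) *
        ((PowerSeries.trunc n f' : Polynomial k) : PowerSeries k)) (coe_pV g _)
      (by push_cast; rw [coe_pV g, coe_pV g]) fun j hj => ?_
    rw [PowerSeries.coeff_coe_trunc_of_lt hj,
      PowerSeries.coeff_mul_eq_coeff_trunc_mul_trunc f f' hj]
  map_zero' := by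
    apply AdicCompletion.ext
    intro n
    show chiFun g 0 n = (0 : AdicCompletion (Iv g) (Vring k g)).val n
    rw [AdicCompletion.val_zero, Pi.zero_apply]
    show Submodule.Quotient.mk (pV g (PowerSeries.trunc n 0)) = _
    rw [map_zero, map_zero, Submodule.Quotient.mk_zero]
  map_add' f f' := by
    apply AdicCompletion.ext
    intro n
    show chiFun g (f + f') n = chiFun g f n + chiFun g f' n
    simp only [chiFun]
    rw [← Submodule.Quotient.mk_add, ← map_add, map_add (PowerSeries.trunc n)]

theorem chi_injective : Function.Injective (chi g) := by
  rw [injective_iff_map_eq_zero]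
  intro f hf
  ext m
  have h : Submodule.Quotient.mk
      (p := (Iv g ^ (m + 1) • ⊤ : Submodule (Vring k g) (Vring k g)))
      (pV g (PowerSeries.trunc (m + 1) f)) =
      (0 : AdicCompletion (Iv g) (Vring k g)).val (m + 1) := by
    rw [← hf]; rfl
  rw [AdicCompletion.val_zero, Pi.zero_apply, Submodule.Quotient.mk_eq_zero] at h
  rw [mem_iff g (m + 1) _ _ (coe_pV g _).symm, PowerSeries.X_pow_dvd_iff] at h
  have := h m (Nat.lt_succ_self m)
  rw [PowerSeries.coeff_coe_trunc_of_lt (Nat.lt_succ_self m)] at this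
  simpa using this

theorem chi_surjective : Function.Surjective (chi g) := by
  intro x
  have hrep : ∀ n : ℕ, ∃ v : Vring k g,
      Submodule.Quotient.mk (p := (Iv g ^ n • ⊤ : Submodule (Vring k g) (Vring k g))) v =
        x.val n := fun n => Submodule.Quotient.mk_surjective _ (x.val n)
  choose v hv using hrep
  have hps : ∀ n : ℕ, ∃ vp : PowerSeries k,
      HahnSeries.ofPowerSeries ℤ k vp = ((v n : LaurentSeries k)) := fun n => (v n).2.2
  choose vp hvp using hps
  refine ⟨PowerSeries.mk (fun m => PowerSeries.coeff m (vp (m + 1))), ?_⟩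
  apply AdicCompletion.ext
  intro n
  show Submodule.Quotient.mk (pV g (PowerSeries.trunc n _)) = x.val n
  rw [← hv n]
  refine mk_eq_mk g _ (vp n) (coe_pV g _) (hvp n).symm fun m hm => ?_
  rw [PowerSeries.coeff_coe_trunc_of_lt hm, PowerSeries.coeff_mk]
  have hmn : m + 1 ≤ n := hm
  have hcomp := x.property hmn
  rw [← hv n, ← hv (m + 1)] at hcomp
  have hcomp' : Submodule.Quotient.mk
      (p := (Iv g ^ (m + 1) • ⊤ : Submodule (Vring k g) (Vring k g))) (v n) =
      Submodule.Quotient.mk (v (m + 1)) := hcomp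
  rw [Submodule.Quotient.eq] at hcomp'
  rw [mem_iff g (m + 1) _ (vp n - vp (m + 1))
    (by push_cast; rw [hvp n, hvp (m + 1)])] at hcomp'
  rw [PowerSeries.X_pow_dvd_iff] at hcomp'
  have := hcomp' m (Nat.lt_succ_self m)
  rw [map_sub, sub_eq_zero] at this
  exact this.symm

end Stmt7Aux

set_option synthInstance.maxHeartbeats 800000 in
/-- the `m`-adic completion of `V = k(t,g) ∩ k[[t]]` (where `m = (t)`) is
isomorphic to `k[[t]]`. -/
theorem stmt7 {k : Type*} [Field k] (g : PowerSeries k)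
    (hg0 : PowerSeries.constantCoeff g = 0)
    (hder : ((PowerSeries.derivative k g : PowerSeries k) : LaurentSeries k) ∉
      IntermediateField.adjoin k
        {((PowerSeries.X : PowerSeries k) : LaurentSeries k), (g : LaurentSeries k)}) :
    Nonempty
      (AdicCompletion
          (Ideal.span {(⟨_, X_mem_Vring k g⟩ : Vring k g)}) (Vring k g) ≃+*
        PowerSeries k) := by
  exact ⟨(RingEquiv.ofBijective (Stmt7Aux.chi g)
    ⟨Stmt7Aux.chi_injective g, Stmt7Aux.chi_surjective g⟩).symm⟩
end

section
/- Let $k$ be a field of characteristic zero, and let $A = k[t, g]$ be a polynomial ring in two variables. Then the polynomial $X^2 + g^2 - 1$ is irreducible in $A[X]$. Consequently, if $g \in k[[t]]$ is a transcendental power series satisfying $\left(\frac{dg}{dt}\right)^2 = 1 - g^2$ (such as the sine series), then $\frac{dg}{dt} \notin k(t,g)$. -/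
open PowerSeries IntermediateField

open Polynomial

lemma aux_sq_rm {F : Type*} [Field F] (q : Polynomial F) (hq : q ≠ 0) :
    rootMultiplicity (1:F) (q ^ 2) = 2 * rootMultiplicity (1:F) q := by
  rw [pow_two, rootMultiplicity_mul (mul_ne_zero hq hq), two_mul]

lemma aux_no_sqrt {F : Type*} [Field F] [CharZero F] (p q : Polynomial F)
    (h : p ^ 2 = (1 - Polynomial.X ^ 2) * q ^ 2) : q = 0 := by
  by_contra hq
  have hfact : (1 - Polynomial.X ^ 2 : F[X]) =
      Polynomial.C (-1) * ((Polynomial.X - Polynomial.C 1) * (Polynomial.X - Polynomial.C (-1))) := by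
    simp only [map_neg, map_one]
    ring
  have hX : (1 - Polynomial.X ^ 2 : F[X]) ≠ 0 := by
    intro h0
    have := congrArg (fun r => Polynomial.coeff r 2) h0
    simp [Polynomial.coeff_one] at this
  have hq2 : (q ^ 2 : F[X]) ≠ 0 := pow_ne_zero _ hq
  have hp : p ≠ 0 := by
    intro h0
    rw [h0, zero_pow two_ne_zero] at h
    exact (mul_ne_zero hX hq2) h.symm
  have e1 : rootMultiplicity (1:F) (Polynomial.X - Polynomial.C 1) = 1 :=
    rootMultiplicity_X_sub_C_self
  have e2 : rootMultiplicity (1:F) (Polynomial.X - Polynomial.C (-1:F)) = 0 :=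
    rootMultiplicity_eq_zero (by simp [IsRoot])
  have e3 : rootMultiplicity (1:F) (Polynomial.C (-1:F)) = 0 :=
    rootMultiplicity_eq_zero (by simp [IsRoot])
  have hne2 : ((Polynomial.X - Polynomial.C 1) * (Polynomial.X - Polynomial.C (-1:F))) ≠ 0 := by
    intro h0
    exact hX (by rw [hfact, h0, mul_zero])
  have hC : (Polynomial.C (-1:F)) ≠ 0 := by simp
  have lhs : rootMultiplicity (1:F) (p ^ 2) = 2 * rootMultiplicity (1:F) p := aux_sq_rm p hp
  have rhs : rootMultiplicity (1:F) ((1 - Polynomial.X ^ 2) * q ^ 2)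
      = 1 + 2 * rootMultiplicity (1:F) q := by
    rw [rootMultiplicity_mul (mul_ne_zero hX hq2), aux_sq_rm q hq, hfact,
      rootMultiplicity_mul (mul_ne_zero hC hne2),
      rootMultiplicity_mul (by rw [hfact] at hX; exact fun h0 => hX (by rw [h0, mul_zero]))]
    rw [e1, e2, e3]
  rw [h, rhs] at lhs
  omega


set_option maxHeartbeats 1000000 in
set_option synthInstance.maxHeartbeats 400000 in
/-- over a field `k` of characteristic zero, `X² + g² - 1` is irreducible
in `A[X]` where `A = k[t,g]` is a polynomial ring in two variables; consequently, if
`g ∈ k[[t]]` is a transcendental power series with `(dg/dt)² = 1 - g²`, then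
`dg/dt ∉ k(t,g)`. -/
theorem stmt10 {k : Type*} [Field k] [CharZero k] :
    Irreducible
      (Polynomial.X ^ 2 +
        Polynomial.C ((MvPolynomial.X 1 : MvPolynomial (Fin 2) k) ^ 2 - 1)) ∧
    ∀ g : PowerSeries k,
      Transcendental
        (IntermediateField.adjoin k {((PowerSeries.X : PowerSeries k) : LaurentSeries k)})
        (g : LaurentSeries k) →
      (PowerSeries.derivative k g : PowerSeries k) ^ 2 = 1 - g ^ 2 →
      ((PowerSeries.derivative k g : PowerSeries k) : LaurentSeries k) ∉
        IntermediateField.adjoin k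
          {((PowerSeries.X : PowerSeries k) : LaurentSeries k), (g : LaurentSeries k)} := by
  constructor
  · -- Part 1: irreducibility
    set a : MvPolynomial (Fin 2) k := MvPolynomial.X 1 ^ 2 - 1 with ha
    have hm : (Polynomial.X ^ 2 + Polynomial.C a).Monic := monic_X_pow_add_C a two_ne_zero
    have hd : (Polynomial.X ^ 2 + Polynomial.C a).natDegree = 2 := natDegree_X_pow_add_C
    by_contra hirr
    obtain ⟨c₁, c₂, h0, h1⟩ := (hm.not_irreducible_iff_exists_add_mul_eq_coeff hd).mp hirr
    rw [Polynomial.coeff_add, Polynomial.coeff_X_pow, Polynomial.coeff_C] at h0 h1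
    norm_num at h0 h1
    -- h0 : a = c₁ * c₂, h1 : 0 = c₁ + c₂
    have hc2 : c₂ = -c₁ := by linear_combination -h1
    have key : c₁ ^ 2 = 1 - MvPolynomial.X 1 ^ 2 := by
      rw [hc2, ha] at h0
      linear_combination h0
    have := aux_no_sqrt
      (MvPolynomial.aeval (fun i : Fin 2 => if i = 1 then (Polynomial.X : Polynomial k) else 0) c₁)
      1 ?_
    · simpa using this
    · have := congrArg (MvPolynomial.aeval
        (fun i : Fin 2 => if i = 1 then (Polynomial.X : Polynomial k) else 0)) key
      simpa [map_pow, map_sub, map_one] using this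
  · -- Part 2
    intro g htrans hderiv hmem
    set L := LaurentSeries k
    set F := IntermediateField.adjoin k {((PowerSeries.X : PowerSeries k) : L)} with hF
    set gc : L := (g : L) with hgc
    set h : L := ((PowerSeries.derivative k g : PowerSeries k) : L) with hh
    clear_value F gc h
    haveI : CharZero L :=
      charZero_of_injective_algebraMap (algebraMap k (LaurentSeries k)).injective
    haveI : CharZero F := inferInstance
    -- h² = 1 - gc²
    have hL : h ^ 2 = 1 - gc ^ 2 := by
      have := congrArg (fun f : PowerSeries k => (f : L)) hderiv
      simpa [hh, hgc, map_pow, map_sub, map_one] using this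
    -- transcendence gives injectivity of aeval
    have hinj := transcendental_iff_injective.mp htrans
    -- g is not a root of X² - 1
    have hg2 : gc ^ 2 ≠ 1 := by
      intro he
      apply htrans
      refine ⟨Polynomial.X ^ 2 - 1, ?_, ?_⟩
      · intro h0
        have := congrArg (fun r => Polynomial.coeff r 2) h0
        simp [Polynomial.coeff_one] at this
      · simp [he]
    -- membership in F⟮gc⟯
    have hFE : ∀ x : L, x ∈ F → x ∈ adjoin F {gc} := fun x hx =>
      (adjoin F {gc}).algebraMap_mem (⟨x, hx⟩ : F)
    have hT : ∀ r, algebraMap k L r ∈ (adjoin F {gc}).toSubfield := fun r =>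
      hFE _ (F.algebraMap_mem r)
    have memT : ∀ x : L, x ∈ adjoin F {gc} →
        x ∈ (adjoin F {gc}).toSubfield.toIntermediateField hT := fun x hx => hx
    have memT' : ∀ x : L, x ∈ (adjoin F {gc}).toSubfield.toIntermediateField hT →
        x ∈ adjoin F {gc} := fun x hx => hx
    have gcmem : gc ∈ adjoin F {gc} := IntermediateField.subset_adjoin F {gc} rfl
    have Xcmem : ((PowerSeries.X : PowerSeries k) : L) ∈ F := by
      rw [hF]; exact IntermediateField.subset_adjoin k _ rfl
    have hle : adjoin k {((PowerSeries.X : PowerSeries k) : L), gc}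
        ≤ (adjoin F {gc}).toSubfield.toIntermediateField hT := by
      rw [IntermediateField.adjoin_le_iff]
      rintro x (rfl | rfl)
      · exact memT _ (hFE _ Xcmem)
      · exact memT _ gcmem
    have hmem2 : h ∈ adjoin F {gc} := memT' _ (hle hmem)
    obtain ⟨r, s, hrs⟩ := (IntermediateField.mem_adjoin_simple_iff F h).mp hmem2
    by_cases hs : (Polynomial.aeval gc s : L) = 0
    · rw [hs, div_zero] at hrs
      rw [hrs] at hL
      exact hg2 (by linear_combination hL)
    · have heq : (Polynomial.aeval gc r : L) ^ 2
          = (1 - gc ^ 2) * (Polynomial.aeval gc s : L) ^ 2 := by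
        have : h * Polynomial.aeval gc s = Polynomial.aeval gc r := by
          rw [hrs]; exact div_mul_cancel₀ _ hs
        calc (Polynomial.aeval gc r : L) ^ 2 = (h * Polynomial.aeval gc s) ^ 2 := by rw [this]
          _ = h ^ 2 * (Polynomial.aeval gc s) ^ 2 := by ring
          _ = (1 - gc ^ 2) * (Polynomial.aeval gc s) ^ 2 := by rw [hL]
      have hpoly : r ^ 2 = (1 - Polynomial.X ^ 2) * s ^ 2 := by
        apply hinj
        simpa [map_pow, map_sub, map_mul, map_one] using heq
      exact hs (by rw [aux_no_sqrt r s hpoly, map_zero])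
end

section
/- Let $k$ be a field of characteristic $p > 0$, and let $h, w \in k[[t]]$ be power series such that $\{t, w, h\}$ is algebraically independent over $k$, with $w(0) = 0$. Set $g = t h^p + w^p$. Then $g(0) = 0$ and the formal derivative $\frac{dg}{dt} = h^p$ does not lie in $k(t, g)$. -/
open PowerSeries IntermediateField
open MvPolynomial

lemma aux2 {K A : Type*} [Field K] [CommRing A] [Algebra K A] {a b c : A}
    (H : AlgebraicIndependent K ![a, b, c]) : AlgebraicIndependent K ![a, b] := by
  have h := H.comp ![0, 1] (by decide)
  have e : (![a, b, c] ∘ ![0, 1] : Fin 2 → A) = ![a, b] := by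
    funext i; fin_cases i <;> rfl
  rwa [e] at h

lemma aux3 {K A : Type*} [Field K] [CommRing A] [Algebra K A] {a b c : A}
    (H : AlgebraicIndependent K ![a, b, c]) :
    Transcendental (Algebra.adjoin K {a, b}) c := by
  have h2 := aux2 H
  have h3 : AlgebraicIndependent K (fun o : Option (Fin 2) => o.elim c ![a, b]) := by
    have h := H.comp (fun o : Option (Fin 2) => o.elim 2 ![0, 1]) (by decide)
    have e : (![a, b, c] ∘ fun o : Option (Fin 2) => o.elim 2 ![0, 1]) =
        fun o : Option (Fin 2) => o.elim c ![a, b] := by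
      funext o
      match o with
      | none => rfl
      | some i => fin_cases i <;> rfl
    rwa [e] at h
  have := (h2.option_iff_transcendental c).1 h3
  have hr : Set.range ![a, b] = {a, b} := by
    simp [Matrix.range_cons, Matrix.range_empty, Set.pair_comm b a]
  rwa [hr] at this

lemma auxPerm1 {K A : Type*} [Field K] [CommRing A] [Algebra K A] {a b c : A}
    (H : AlgebraicIndependent K ![a, b, c]) : AlgebraicIndependent K ![a, c, b] := by
  have h := H.comp ![0, 2, 1] (by decide)
  have e : (![a, b, c] ∘ ![0, 2, 1] : Fin 3 → A) = ![a, c, b] := by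
    funext i; fin_cases i <;> rfl
  rwa [e] at h

lemma auxPerm2 {K A : Type*} [Field K] [CommRing A] [Algebra K A] {a b c : A}
    (H : AlgebraicIndependent K ![a, b, c]) : AlgebraicIndependent K ![b, c, a] := by
  have h := H.comp ![1, 2, 0] (by decide)
  have e : (![a, b, c] ∘ ![1, 2, 0] : Fin 3 → A) = ![b, c, a] := by
    funext i; fin_cases i <;> rfl
  rwa [e] at h

lemma auxY {K A : Type*} [Field K] [CommRing A] [Algebra K A] {a b c : A} {p : ℕ} (hp : 0 < p)
    (H : AlgebraicIndependent K ![a, b, c]) :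
    AlgebraicIndependent K ![a, b ^ p, c ^ p] := by
  have Ta : Transcendental (Algebra.adjoin K {b, c}) a := aux3 (auxPerm2 H)
  have Tb : Transcendental (Algebra.adjoin K {a, c}) b := aux3 (auxPerm1 H)
  have Tc : Transcendental (Algebra.adjoin K {a, b}) c := aux3 H
  set y : Fin 3 → A := ![a, b ^ p, c ^ p] with hy
  apply algebraicIndependent_of_finite_type' H.algebraMap_injective
  intro t _ _ i hi
  fin_cases i
  · refine Ta.of_tower_top_of_subalgebra_le (Algebra.adjoin_le ?_)
    rintro z ⟨m, hm, rfl⟩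
    fin_cases m
    · exact absurd hm hi
    · exact pow_mem (Algebra.subset_adjoin (by simp [hy])) p
    · exact pow_mem (Algebra.subset_adjoin (by simp [hy])) p
  · refine (Tb.of_tower_top_of_subalgebra_le (Algebra.adjoin_le ?_)).pow hp
    rintro z ⟨m, hm, rfl⟩
    fin_cases m
    · exact Algebra.subset_adjoin (by simp [hy])
    · exact absurd hm hi
    · exact pow_mem (Algebra.subset_adjoin (by simp [hy])) p
  · refine (Tc.of_tower_top_of_subalgebra_le (Algebra.adjoin_le ?_)).pow hp
    rintro z ⟨m, hm, rfl⟩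
    fin_cases m
    · exact Algebra.subset_adjoin (by simp [hy])
    · exact pow_mem (Algebra.subset_adjoin (by simp [hy])) p
    · exact absurd hm hi

lemma auxMain {K A : Type*} [Field K] [Field A] [Algebra K A] {a u v : A}
    (H : AlgebraicIndependent K ![a, u, v]) :
    v ∉ IntermediateField.adjoin K {a, a * v + u} := by
  intro hmem
  set g : A := a * v + u with hg
  have hr : ({a, g} : Set A) = Set.range ![a, g] := by
    simp [Matrix.range_cons, Matrix.range_empty, Set.pair_comm g a]
  rw [hr, IntermediateField.mem_adjoin_range_iff] at hmem
  obtain ⟨F₀, G₀, hFG₀⟩ := hmem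
  have F : MvPolynomial (Fin 2) K := F₀
  obtain ⟨F, G, hFG⟩ : ∃ F G : MvPolynomial (Fin 2) K,
      v = MvPolynomial.aeval ![a, g] F / MvPolynomial.aeval ![a, g] G := ⟨F₀, G₀, hFG₀⟩
  have hv0 : v ≠ 0 := by
    intro h
    have := H.transcendental 2
    rw [show (![a, u, v] 2) = v from rfl, h] at this
    exact this isAlgebraic_zero
  have hG : MvPolynomial.aeval ![a, g] G ≠ 0 := by
    intro h
    rw [h, div_zero] at hFG
    exact hv0 hFG
  have hre : MvPolynomial.aeval ![a, g] G * v = MvPolynomial.aeval ![a, g] F := by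
    rw [hFG, mul_div_assoc', mul_div_cancel_left₀ _ hG]
  set σ : MvPolynomial (Fin 2) K →ₐ[K] MvPolynomial (Fin 3) K :=
    MvPolynomial.aeval ![MvPolynomial.X 0, MvPolynomial.X 0 * MvPolynomial.X 2 + MvPolynomial.X 1]
    with hσ
  have key : (MvPolynomial.aeval ![a, u, v]).comp σ = MvPolynomial.aeval ![a, g] := by
    apply MvPolynomial.algHom_ext
    intro i
    fin_cases i <;> simp [hσ, hg]
  set P : MvPolynomial (Fin 3) K := σ G * MvPolynomial.X 2 - σ F with hP
  have hP0 : MvPolynomial.aeval ![a, u, v] P = 0 := by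
    have k1 : MvPolynomial.aeval ![a, u, v] (σ G) = MvPolynomial.aeval ![a, g] G := by
      rw [← AlgHom.comp_apply, key]
    have k2 : MvPolynomial.aeval ![a, u, v] (σ F) = MvPolynomial.aeval ![a, g] F := by
      rw [← AlgHom.comp_apply, key]
    rw [hP, map_sub, map_mul, k1, k2, show MvPolynomial.aeval ![a, u, v] (MvPolynomial.X 2)
      = v by simp, hre, sub_self]
  have hPz : P = 0 := (algebraicIndependent_iff.mp H) P hP0
  set ρ : K → (MvPolynomial (Fin 3) K →ₐ[K] MvPolynomial (Fin 2) K) := fun c =>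
    MvPolynomial.aeval ![MvPolynomial.X 0, MvPolynomial.X 1 - MvPolynomial.X 0 * MvPolynomial.C c,
      MvPolynomial.C c] with hρdef
  have hρ : ∀ (c : K) (Q : MvPolynomial (Fin 2) K), ρ c (σ Q) = Q := by
    intro c Q
    rw [← AlgHom.comp_apply]
    have : (ρ c).comp σ = AlgHom.id K (MvPolynomial (Fin 2) K) := by
      apply MvPolynomial.algHom_ext
      intro i
      fin_cases i <;> simp [hρdef, hσ]
    rw [this]; rfl
  have hX2 : ∀ c : K, ρ c (MvPolynomial.X 2) = MvPolynomial.C c := by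
    intro c; simp [hρdef]
  have hF0 : F = 0 := by
    have h0 := congrArg (ρ 0) hPz
    rw [hP, map_sub, map_mul, hρ, hρ, hX2, map_zero] at h0
    simpa using h0
  have hG0 : G = 0 := by
    have h1 := congrArg (ρ 1) hPz
    rw [hP, map_sub, map_mul, hρ, hρ, hX2, map_zero, hF0] at h1
    simpa [sub_eq_zero] using h1
  exact hG (by rw [hG0, map_zero])


/-- for `k` of characteristic `p > 0` and `h, w ∈ k[[t]]` with `{t, w, h}`
algebraically independent over `k` and `w(0) = 0`, the series `g = t·hᵖ + wᵖ` satisfies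
`g(0) = 0`, `dg/dt = hᵖ`, and `dg/dt ∉ k(t,g)`. -/
theorem stmt12 {k : Type*} [Field k] (p : ℕ) [Fact p.Prime] [CharP k p]
    (h w : PowerSeries k)
    (hindep : AlgebraicIndependent k
      ![((PowerSeries.X : PowerSeries k) : LaurentSeries k),
        (w : LaurentSeries k), (h : LaurentSeries k)])
    (hw0 : PowerSeries.constantCoeff w = 0) :
    PowerSeries.constantCoeff (PowerSeries.X * h ^ p + w ^ p) = 0 ∧
    PowerSeries.derivative k (PowerSeries.X * h ^ p + w ^ p) = h ^ p ∧
    ((h ^ p : PowerSeries k) : LaurentSeries k) ∉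
      IntermediateField.adjoin k
        {((PowerSeries.X : PowerSeries k) : LaurentSeries k),
          ((PowerSeries.X * h ^ p + w ^ p : PowerSeries k) : LaurentSeries k)} := by
  have hpp : p ≠ 0 := (Fact.out : p.Prime).ne_zero
  refine ⟨by simp [hw0, zero_pow hpp], ?_, ?_⟩
  · have hp0 : ((p : ℕ) : k⟦X⟧) = 0 := by
      rw [← map_natCast (PowerSeries.C (R := k)), CharP.cast_eq_zero k p, map_zero]
    rw [map_add, Derivation.leibniz, Derivation.leibniz_pow, Derivation.leibniz_pow]
    simp [hp0, PowerSeries.derivative_X]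
  · have c1 : ((h ^ p : PowerSeries k) : LaurentSeries k) = ((h : LaurentSeries k)) ^ p := by
      push_cast
      rfl
    have c2 : ((PowerSeries.X * h ^ p + w ^ p : PowerSeries k) : LaurentSeries k) =
        ((PowerSeries.X : PowerSeries k) : LaurentSeries k) * ((h : LaurentSeries k)) ^ p
          + ((w : LaurentSeries k)) ^ p := by
      push_cast
      rfl
    rw [c1, c2]
    exact auxMain (auxY (Nat.pos_of_ne_zero hpp) hindep)
end

section
/- For every field $k$ of characteristic $p > 0$, there exists a power series $g \in k[[t]]$ such that $g(0) = 0$ and $\frac{dg}{dt} \notin k(t, g)$. -/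
open PowerSeries IntermediateField


section BaseChange

variable {F K : Type*} [Field F] [Field K] [Algebra F K]

/-- Linear independence of power series with coefficients in a subfield ascends to the
big field. -/
lemma li_map_powerSeries {ι : Type*} {v : ι → PowerSeries F}
    (hv : LinearIndependent F v) :
    LinearIndependent K (fun i => PowerSeries.map (algebraMap F K) (v i)) := by
  classical
  rw [linearIndependent_iff'] at hv ⊢
  intro s g hsum i hi
  set B : Module.Basis _ F K := Module.Basis.ofVectorSpace F K
  have hcoeff : ∀ n : ℕ, (∑ i ∈ s, (PowerSeries.coeff n (v i)) • g i) = 0 := by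
    intro n
    have := congrArg (PowerSeries.coeff n) hsum
    rw [map_sum, map_zero] at this
    rw [← this]
    refine Finset.sum_congr rfl fun i _ => ?_
    rw [PowerSeries.coeff_smul, PowerSeries.coeff_map, Algebra.smul_def, mul_comm, smul_eq_mul]
  have hrep : ∀ (n : ℕ) (j), (∑ i ∈ s, (PowerSeries.coeff n (v i)) * B.repr (g i) j) = 0 := by
    intro n j
    have h1 := congrArg B.repr (hcoeff n)
    rw [map_sum, map_zero] at h1
    have h2 := congrArg (fun f : _ →₀ F => f j) h1
    simpa [Finsupp.finset_sum_apply, map_smul, smul_eq_mul] using h2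
  have key : ∀ j, B.repr (g i) j = 0 := by
    intro j
    refine hv s (fun i => B.repr (g i) j) ?_ i hi
    ext n
    rw [map_sum, map_zero]
    calc ∑ i ∈ s, PowerSeries.coeff n (B.repr (g i) j • v i)
        = ∑ i ∈ s, PowerSeries.coeff n (v i) * B.repr (g i) j := by
          refine Finset.sum_congr rfl fun i _ => ?_
          rw [PowerSeries.coeff_smul, smul_eq_mul, mul_comm]
      _ = 0 := hrep n j
  have h0 : B.repr (g i) = 0 := Finsupp.ext key
  simpa using congrArg B.repr.symm h0

end BaseChange

section BaseChange2
open MvPolynomial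
variable {F K : Type*} [Field F] [Field K] [Algebra F K]

lemma ai_map_powerSeries {ι : Type*} {v : ι → PowerSeries F}
    (hv : AlgebraicIndependent F v) :
    AlgebraicIndependent K (fun i => PowerSeries.map (algebraMap F K) (v i)) := by
  classical
  set φ := algebraMap F K
  set vK := fun i => PowerSeries.map φ (v i) with hvK
  have hinj : Function.Injective (MvPolynomial.aeval (R := F) v) :=
    algebraicIndependent_iff_injective_aeval.1 hv
  have hmono : LinearIndependent F
      (fun d : ι →₀ ℕ => MvPolynomial.aeval v (MvPolynomial.monomial d (1 : F))) := by
    have hb := (MvPolynomial.basisMonomials ι F).linearIndependent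
    have h2 := hb.map' (MvPolynomial.aeval v).toLinearMap (LinearMap.ker_eq_bot.2 hinj)
    exact h2
  have hmonoK := li_map_powerSeries (K := K) hmono
  have hmonoK' : LinearIndependent K
      (fun d : ι →₀ ℕ => d.prod fun i n => vK i ^ n) := by
    convert hmonoK using 1
    funext d
    rw [MvPolynomial.aeval_monomial, map_one, one_mul, map_finsuppProd]
    exact Finsupp.prod_congr fun i _ => by rw [map_pow]
  rw [algebraicIndependent_iff]
  intro P hP
  have expand : MvPolynomial.aeval vK P
      = ∑ d ∈ P.support, MvPolynomial.coeff d P • (d.prod fun i n => vK i ^ n) := by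
    rw [MvPolynomial.aeval_def, MvPolynomial.eval₂_eq]
    refine Finset.sum_congr rfl fun d _ => ?_
    rw [Algebra.smul_def]
    rfl
  rw [expand] at hP
  have := linearIndependent_iff'.1 hmonoK' P.support (fun d => MvPolynomial.coeff d P) hP
  ext d
  by_cases hd : d ∈ P.support
  · simpa using this d hd
  · simpa using MvPolynomial.notMem_support_iff.1 hd

end BaseChange2

section Core

lemma not_mem_adjoin_core {k L : Type*} [Field k] [Field L] [Algebra k L]
    {x u v : L} (hind : AlgebraicIndependent k ![x, u, v]) :
    u ∉ IntermediateField.adjoin k {x, x * u + v} := by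
  intro hmem
  have hrange : ({x, x * u + v} : Set L) = Set.range ![x, x * u + v] := by
    ext y
    constructor
    · rintro (rfl | rfl)
      exacts [⟨0, rfl⟩, ⟨1, rfl⟩]
    · rintro ⟨i, rfl⟩
      fin_cases i
      · exact Or.inl rfl
      · exact Or.inr rfl
  rw [hrange, IntermediateField.mem_adjoin_range_iff] at hmem
  obtain ⟨r, s, hu⟩ := hmem
  have hune : u ≠ 0 := by
    have := hind.ne_zero 1
    simpa using this
  have hsne : MvPolynomial.aeval ![x, x * u + v] s ≠ 0 := by
    intro h0
    rw [h0, div_zero] at hu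
    exact hune hu
  have hmul : u * MvPolynomial.aeval ![x, x * u + v] s = MvPolynomial.aeval ![x, x * u + v] r := by
    have h := div_mul_cancel₀ (MvPolynomial.aeval ![x, x * u + v] r) hsne
    rwa [← hu] at h
  set T : Fin 2 → MvPolynomial (Fin 3) k :=
    ![MvPolynomial.X 0, MvPolynomial.X 0 * MvPolynomial.X 1 + MvPolynomial.X 2] with hT
  set σ : MvPolynomial (Fin 2) k →ₐ[k] MvPolynomial (Fin 3) k := MvPolynomial.aeval T with hσ
  have hcomp : ∀ q : MvPolynomial (Fin 2) k,
      MvPolynomial.aeval ![x, u, v] (σ q) = MvPolynomial.aeval ![x, x * u + v] q := by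
    intro q
    rw [show (MvPolynomial.aeval ![x, u, v]) (σ q)
        = ((MvPolynomial.aeval ![x, u, v]).comp σ) q from rfl, hσ, MvPolynomial.comp_aeval]
    have hfun : (fun i => MvPolynomial.aeval ![x, u, v] (T i)) = ![x, x * u + v] := by
      funext j
      fin_cases j <;> simp [hT]
    rw [hfun]
  have hP : MvPolynomial.aeval ![x, u, v]
      (MvPolynomial.X 1 * σ s - σ r) = 0 := by
    rw [map_sub, map_mul, hcomp, hcomp, MvPolynomial.aeval_X]
    simp only [Matrix.cons_val_one, Matrix.head_cons, Matrix.cons_val_zero]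
    rw [hmul, sub_self]
  have hP0 : (MvPolynomial.X 1 : MvPolynomial (Fin 3) k) * σ s - σ r = 0 :=
    hind.eq_zero_of_aeval_eq_zero _ hP
  -- two evaluations
  have keyEval : ∀ (a : MvPolynomial (Fin 2) k) (b : MvPolynomial (Fin 2) k),
      (∀ j : Fin 2, MvPolynomial.aeval (![MvPolynomial.X 0, a, b] :
          Fin 3 → MvPolynomial (Fin 2) k) (T j) = MvPolynomial.X j) →
      a * s = r := by
    intro a b hab
    set A : MvPolynomial (Fin 3) k →ₐ[k] MvPolynomial (Fin 2) k :=
      MvPolynomial.aeval ![MvPolynomial.X 0, a, b] with hA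
    have hAσ : ∀ q, A (σ q) = q := by
      intro q
      rw [show A (σ q) = (A.comp σ) q from rfl, hσ, MvPolynomial.comp_aeval]
      have : (fun i => A (T i)) = (MvPolynomial.X : Fin 2 → MvPolynomial (Fin 2) k) := by
        funext j
        exact hab j
      rw [this, MvPolynomial.aeval_X_left_apply]
    have := congrArg A hP0
    rw [map_sub, map_mul, map_zero, hAσ, hAσ] at this
    have hAX1 : A (MvPolynomial.X 1) = a := by
      rw [hA, MvPolynomial.aeval_X]
      simp
    rw [hAX1, sub_eq_zero] at this
    exact this
  have h0 : (0 : MvPolynomial (Fin 2) k) * s = r := by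
    refine keyEval 0 (MvPolynomial.X 1) fun j => ?_
    fin_cases j <;> simp [hT]
  have h1 : (1 : MvPolynomial (Fin 2) k) * s = r := by
    refine keyEval 1 (MvPolynomial.X 1 - MvPolynomial.X 0) fun j => ?_
    fin_cases j <;> simp [hT]
  rw [zero_mul] at h0
  rw [one_mul] at h1
  rw [h1, ← h0] at hsne
  simp at hsne

end Core

section Exist

open Cardinal

/-- The bundled algebra homomorphism from power series to Laurent series. -/
noncomputable def psCoeAlgHom (R : Type*) [CommSemiring R] :
    PowerSeries R →ₐ[R] LaurentSeries R :=
  { HahnSeries.ofPowerSeries ℤ R with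
    commutes' := fun r => (HahnSeries.algebraMap_apply' (Γ := ℤ) (R := R) r).symm }

lemma psCoeAlgHom_apply {R : Type*} [CommSemiring R] (f : PowerSeries R) :
    psCoeAlgHom R f = (f : LaurentSeries R) := rfl

lemma aleph0_lt_mk_laurent (F : Type) [Field F] : ℵ₀ < #(LaurentSeries F) := by
  have hinj : Function.Injective
      (fun f : ℕ → Bool =>
        ((PowerSeries.mk (fun n => if f n then (1 : F) else 0) : PowerSeries F) :
          LaurentSeries F)) := by
    intro f1 f2 h
    have h2 := HahnSeries.ofPowerSeries_injective h
    funext n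
    have h3 := congrArg (PowerSeries.coeff n) h2
    rw [PowerSeries.coeff_mk, PowerSeries.coeff_mk] at h3
    by_cases hf1 : f1 n <;> by_cases hf2 : f2 n <;>
      simp [hf1, hf2] at h3 ⊢
  calc ℵ₀ < 2 ^ ℵ₀ := cantor _
    _ = #(ℕ → Bool) := by
        rw [← Cardinal.power_def, Cardinal.mk_bool, Cardinal.mk_nat]
    _ ≤ #(LaurentSeries F) := mk_le_of_injective hinj

lemma exists_transcendental_over (F : Type) [Field F]
    (E : IntermediateField F (LaurentSeries F)) (hE : #E ≤ ℵ₀) :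
    ∃ a : LaurentSeries F, Transcendental E a := by
  by_contra hc
  push_neg at hc
  haveI : Algebra.IsAlgebraic E (LaurentSeries F) :=
    ⟨fun a => not_not.1 (hc a)⟩
  haveI : Module.IsTorsionFree E (LaurentSeries F) :=
    Module.IsTorsionFree.of_smul_eq_zero fun r m h => by
      rw [Algebra.smul_def, mul_eq_zero, _root_.map_eq_zero] at h; exact h
  have h := Algebra.IsAlgebraic.cardinalMk_le_max (↥E) (LaurentSeries F)
  have h2 := aleph0_lt_mk_laurent F
  have : #(LaurentSeries F) ≤ ℵ₀ := h.trans (max_le hE le_rfl)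
  exact absurd this (not_le.2 h2)

lemma single_int_mem (F : Type) [Field F] (E : IntermediateField F (LaurentSeries F))
    (hX : ((PowerSeries.X : PowerSeries F) : LaurentSeries F) ∈ E) (m : ℤ) :
    (HahnSeries.single m (1 : F) : LaurentSeries F) ∈ E := by
  have hpos : ∀ n : ℕ, (HahnSeries.single (n : ℤ) (1 : F) : LaurentSeries F) ∈ E := by
    intro n
    have hXn : ((PowerSeries.X : PowerSeries F) : LaurentSeries F) ^ n
        = HahnSeries.single (n : ℤ) (1 : F) := by
      rw [PowerSeries.coe_X, HahnSeries.single_pow]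
      simp
    rw [← hXn]
    exact pow_mem hX n
  cases m with
  | ofNat n => exact hpos n
  | negSucc n =>
      have h1 : (HahnSeries.single (Int.negSucc n) (1 : F) : LaurentSeries F) *
          HahnSeries.single ((n + 1 : ℕ) : ℤ) (1 : F) = 1 := by
        rw [HahnSeries.single_mul_single, one_mul]
        have : Int.negSucc n + ((n + 1 : ℕ) : ℤ) = 0 := by
          simp [Int.negSucc_eq]
        rw [this, HahnSeries.single_zero_one]
      have h2 : (HahnSeries.single (Int.negSucc n) (1 : F) : LaurentSeries F)
          = (HahnSeries.single ((n + 1 : ℕ) : ℤ) (1 : F))⁻¹ :=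
        eq_inv_of_mul_eq_one_left h1
      rw [h2]
      exact inv_mem (hpos (n + 1))

lemma trans_of_IF {F L : Type*} [Field F] [Field L] [Algebra F L] {S : Set L} {a : L}
    (h : Transcendental (IntermediateField.adjoin F S) a) :
    Transcendental (Algebra.adjoin F S) a := by
  rintro ⟨q, hq0, hq⟩
  let ψ : (Algebra.adjoin F S) →+* (IntermediateField.adjoin F S) :=
    { toFun := fun z => ⟨z.1, IntermediateField.algebra_adjoin_le_adjoin F S z.2⟩
      map_one' := rfl
      map_mul' := fun _ _ => rfl
      map_zero' := rfl
      map_add' := fun _ _ => rfl }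
  have hψval : ∀ z, (ψ z).1 = z.1 := fun _ => rfl
  have hψ : Function.Injective ψ := by
    intro a b hh
    refine Subtype.ext ?_
    rw [← hψval a, ← hψval b, hh]
  refine h ⟨q.map ψ, ?_, ?_⟩
  · intro hzero
    exact hq0 (Polynomial.map_injective ψ hψ (by rw [hzero, Polynomial.map_zero]))
  · rw [Polynomial.aeval_def, Polynomial.eval₂_map,
      show (algebraMap (IntermediateField.adjoin F S) L).comp ψ
        = algebraMap (Algebra.adjoin F S) L from RingHom.ext fun z => rfl,
      ← Polynomial.aeval_def]
    exact hq

lemma exists_ps_trans (F : Type) [Field F] [Countable F] (S : Set (LaurentSeries F))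
    (hS : S.Countable)
    (hX : ((PowerSeries.X : PowerSeries F) : LaurentSeries F) ∈ IntermediateField.adjoin F S) :
    ∃ h : PowerSeries F, PowerSeries.constantCoeff h = 0 ∧
      Transcendental (IntermediateField.adjoin F S) ((h : PowerSeries F) : LaurentSeries F) := by
  set E := IntermediateField.adjoin F S with hE
  have hcard : #E ≤ ℵ₀ := by
    haveI := hS.to_subtype
    refine (IntermediateField.cardinalMk_adjoin_le F S).trans ?_
    exact max_le (max_le (Cardinal.mk_le_aleph0) (Cardinal.mk_le_aleph0)) le_rfl
  obtain ⟨a, ha⟩ := exists_transcendental_over F E hcard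
  set P := a.powerSeriesPart with hP
  set c0 := PowerSeries.constantCoeff P with hc0
  have hmemE : ∀ z ∈ E, IsIntegral (↥E) z := by
    intro z hz
    have : algebraMap (↥E) (LaurentSeries F) ⟨z, hz⟩ = z := rfl
    rw [← this]
    exact isIntegral_algebraMap
  refine ⟨P - PowerSeries.C c0, by simp [hc0], ?_⟩
  intro halg
  apply ha
  rw [isAlgebraic_iff_isIntegral]
  have hcoe : ((P - PowerSeries.C c0 : PowerSeries F) : LaurentSeries F)
      = (P : LaurentSeries F) - algebraMap F (LaurentSeries F) c0 := by
    rw [PowerSeries.coe_sub]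
    rfl
  rw [hcoe] at halg
  have hint1 : IsIntegral (↥E) ((P : LaurentSeries F) - algebraMap F (LaurentSeries F) c0) :=
    isAlgebraic_iff_isIntegral.1 halg
  have hconst : IsIntegral (↥E) (algebraMap F (LaurentSeries F) c0) :=
    hmemE _ (E.algebraMap_mem c0)
  have hPint : IsIntegral (↥E) ((P : LaurentSeries F)) := by
    have := hint1.add hconst
    simpa using this
  have hsingle : IsIntegral (↥E) ((HahnSeries.single a.order 1 : LaurentSeries F)) :=
    hmemE _ (single_int_mem F E hX a.order)
  have hfin := hsingle.mul hPint
  rwa [LaurentSeries.single_order_mul_powerSeriesPart] at hfin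

lemma transcendental_X_laurent (F : Type) [Field F] :
    Transcendental F ((PowerSeries.X : PowerSeries F) : LaurentSeries F) := by
  rw [transcendental_iff_injective]
  have heq : (Polynomial.aeval ((PowerSeries.X : PowerSeries F) : LaurentSeries F) :
        Polynomial F →ₐ[F] LaurentSeries F)
      = (psCoeAlgHom F).comp (Polynomial.coeToPowerSeries.algHom F) := by
    apply Polynomial.algHom_ext
    rw [Polynomial.aeval_X, AlgHom.comp_apply]
    rw [show Polynomial.coeToPowerSeries.algHom F (Polynomial.X)
      = (PowerSeries.X : PowerSeries F) by
        rw [Polynomial.coeToPowerSeries.algHom_apply, Polynomial.coe_X,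
          Algebra.algebraMap_self, PowerSeries.map_id]; rfl]
    rfl
  rw [heq]
  have h1 : Function.Injective (psCoeAlgHom F) := fun a b hab =>
    HahnSeries.ofPowerSeries_injective hab
  have h2 : Function.Injective (Polynomial.coeToPowerSeries.algHom (R := F) F) := by
    intro a b hab
    simpa [Polynomial.coeToPowerSeries.algHom_apply, Algebra.algebraMap_self,
      PowerSeries.map_id] using hab
  exact h1.comp h2

lemma exists_triple (F : Type) [Field F] [Countable F] :
    ∃ h0 w0 : PowerSeries F, PowerSeries.constantCoeff w0 = 0 ∧
      AlgebraicIndependent F ![(PowerSeries.X : PowerSeries F), h0, w0] := by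
  classical
  set x0 : LaurentSeries F := ((PowerSeries.X : PowerSeries F) : LaurentSeries F) with hx0def
  have hx0 : Transcendental F x0 := transcendental_X_laurent F
  have hXmem1 : x0 ∈ IntermediateField.adjoin F ({x0} : Set (LaurentSeries F)) :=
    IntermediateField.subset_adjoin F _ rfl
  obtain ⟨h0, _, hh0t⟩ := exists_ps_trans F {x0} (Set.countable_singleton _) hXmem1
  set hL : LaurentSeries F := (h0 : LaurentSeries F) with hLdef
  have hXmem2 : x0 ∈ IntermediateField.adjoin F ({hL, x0} : Set (LaurentSeries F)) :=
    IntermediateField.subset_adjoin F _ (by simp)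
  obtain ⟨w0, hw0c, hw0t⟩ := exists_ps_trans F {hL, x0} ((Set.toFinite _).countable) hXmem2
  set wL : LaurentSeries F := (w0 : LaurentSeries F) with wLdef
  have i1 : AlgebraicIndependent F (fun _ : Fin 1 => x0) :=
    algebraicIndependent_unique_type_iff.2 hx0
  have t2 : Transcendental (Algebra.adjoin F (Set.range fun _ : Fin 1 => x0)) hL := by
    rw [Set.range_const]
    exact trans_of_IF hh0t
  have i2 : AlgebraicIndependent F (fun o : Option (Fin 1) => o.elim hL fun _ => x0) :=
    (i1.option_iff_transcendental hL).2 t2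
  have hrange2 : (Set.range fun o : Option (Fin 1) => o.elim hL fun _ => x0) = {hL, x0} := by
    ext y
    constructor
    · rintro ⟨o, rfl⟩
      cases o with
      | none => exact Or.inl rfl
      | some i => exact Or.inr rfl
    · rintro (rfl | rfl)
      exacts [⟨none, rfl⟩, ⟨some 0, rfl⟩]
  have t3 : Transcendental
      (Algebra.adjoin F (Set.range fun o : Option (Fin 1) => o.elim hL fun _ => x0)) wL := by
    rw [hrange2]
    exact trans_of_IF hw0t
  have i3 : AlgebraicIndependent F
      (fun o : Option (Option (Fin 1)) =>
        o.elim wL (fun o' : Option (Fin 1) => o'.elim hL fun _ => x0)) :=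
    (i2.option_iff_transcendental wL).2 t3
  let e : Fin 3 ≃ Option (Option (Fin 1)) :=
    { toFun := ![some (some 0), some none, none]
      invFun := fun o => o.elim 2 (fun o' => o'.elim 1 fun _ => 0)
      left_inv := by decide
      right_inv := by decide }
  have i4 : AlgebraicIndependent F ![x0, hL, wL] :=
    (algebraicIndependent_equiv' e
      (f := fun o : Option (Option (Fin 1)) =>
        o.elim wL (fun o' : Option (Fin 1) => o'.elim hL fun _ => x0))
      (g := ![x0, hL, wL])
      (by funext i; fin_cases i <;> simp [e])).2 i3
  refine ⟨h0, w0, hw0c, ?_⟩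
  apply AlgebraicIndependent.of_comp (psCoeAlgHom F)
  have : (⇑(psCoeAlgHom F)) ∘ ![(PowerSeries.X : PowerSeries F), h0, w0] = ![x0, hL, wL] := by
    funext i
    fin_cases i <;> rfl
  rw [this]
  exact i4

end Exist

/-- over every field `k` of characteristic `p > 0` there is a power series
`g ∈ k[[t]]` with `g(0) = 0` whose formal derivative does not lie in `k(t,g)`. -/
theorem stmt13 {k : Type*} [Field k] (p : ℕ) [Fact p.Prime] [CharP k p] :
    ∃ g : PowerSeries k,
      PowerSeries.constantCoeff g = 0 ∧
      ((PowerSeries.derivative k g : PowerSeries k) : LaurentSeries k) ∉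
        IntermediateField.adjoin k
          {((PowerSeries.X : PowerSeries k) : LaurentSeries k), (g : LaurentSeries k)} := by
  classical
  haveI : NeZero p := ⟨(Fact.out : p.Prime).ne_zero⟩
  letI : Algebra (ZMod p) k := (ZMod.castHom dvd_rfl k).toAlgebra
  obtain ⟨h0, w0, hw0c, hind⟩ := exists_triple (ZMod p)
  set hk : PowerSeries k := PowerSeries.map (algebraMap (ZMod p) k) h0 with hkdef
  set wk : PowerSeries k := PowerSeries.map (algebraMap (ZMod p) k) w0 with wkdef
  have hindk : AlgebraicIndependent k ![(PowerSeries.X : PowerSeries k), hk, wk] := by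
    have h := ai_map_powerSeries (K := k) hind
    have he : (fun i => PowerSeries.map (algebraMap (ZMod p) k)
        (![(PowerSeries.X : PowerSeries (ZMod p)), h0, w0] i))
        = ![(PowerSeries.X : PowerSeries k), hk, wk] := by
      funext i
      fin_cases i <;> simp [hkdef, wkdef, PowerSeries.map_X]
    rwa [he] at h
  set xL : LaurentSeries k := ((PowerSeries.X : PowerSeries k) : LaurentSeries k) with xLdef
  set hL : LaurentSeries k := ((hk : PowerSeries k) : LaurentSeries k) with hLdef
  set wL : LaurentSeries k := ((wk : PowerSeries k) : LaurentSeries k) with wLdef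
  have hindL : AlgebraicIndependent k ![xL, hL, wL] := by
    have h := hindk.map' (f := psCoeAlgHom k)
      (fun a b hab => HahnSeries.ofPowerSeries_injective hab)
    have he : (⇑(psCoeAlgHom k)) ∘ ![(PowerSeries.X : PowerSeries k), hk, wk]
        = ![xL, hL, wL] := by
      funext i
      fin_cases i <;> rfl
    rwa [he] at h
  have hppos : p ≠ 0 := (Fact.out : p.Prime).ne_zero
  have hindP : AlgebraicIndependent k ![xL, hL ^ p, wL ^ p] := by
    have hxp : Transcendental k ((Polynomial.X : Polynomial k) ^ p) := by
      apply Polynomial.transcendental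
      · simpa using hppos
      · rw [Polynomial.leadingCoeff_X_pow]
        exact Submonoid.one_mem _
    have htr : ∀ i : Fin 3, Transcendental k
        (![(Polynomial.X : Polynomial k), Polynomial.X ^ p, Polynomial.X ^ p] i) := by
      intro i
      fin_cases i
      · exact Polynomial.transcendental_X k
      · exact hxp
      · exact hxp
    have h := hindL.polynomial_aeval_of_transcendental
      (f := ![Polynomial.X, Polynomial.X ^ p, Polynomial.X ^ p]) htr
    have he : (fun i => Polynomial.aeval (![xL, hL, wL] i)
        (![(Polynomial.X : Polynomial k), Polynomial.X ^ p, Polynomial.X ^ p] i))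
        = ![xL, hL ^ p, wL ^ p] := by
      funext i
      fin_cases i <;> simp
    rwa [he] at h
  refine ⟨PowerSeries.X * hk ^ p + wk ^ p, ?_, ?_⟩
  · have hwc : PowerSeries.constantCoeff wk = 0 := by
      rw [wkdef, ← PowerSeries.coeff_zero_eq_constantCoeff_apply, PowerSeries.coeff_map,
        PowerSeries.coeff_zero_eq_constantCoeff_apply, hw0c, map_zero]
    simp [hwc, PowerSeries.constantCoeff_X, hppos]
  · have hp0 : (p : PowerSeries k) = 0 := by
      rw [← map_natCast (PowerSeries.C (R := k)) p, CharP.cast_eq_zero, map_zero]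
    have dpow : ∀ f : PowerSeries k, PowerSeries.derivative k (f ^ p) = 0 := by
      intro f
      rw [Derivation.leibniz_pow, nsmul_eq_mul, hp0, zero_mul]
    have hder : (PowerSeries.derivative k (PowerSeries.X * hk ^ p + wk ^ p) : PowerSeries k)
        = hk ^ p := by
      rw [map_add, Derivation.leibniz, dpow hk, dpow wk, PowerSeries.derivative_X]
      simp
    rw [hder]
    intro hmem
    have hg : ((PowerSeries.X * hk ^ p + wk ^ p : PowerSeries k) : LaurentSeries k)
        = xL * hL ^ p + wL ^ p := by
      rw [PowerSeries.coe_add, PowerSeries.coe_mul, PowerSeries.coe_pow, PowerSeries.coe_pow]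
    rw [hg] at hmem
    have hppow : ((hk ^ p : PowerSeries k) : LaurentSeries k) = hL ^ p := by
      rw [PowerSeries.coe_pow]
    rw [hppow] at hmem
    exact not_mem_adjoin_core hindP hmem
end

section
/- Let $k$ be a field, $g \in k[[t]]$ a power series with $g(0)=0$ and $\frac{dg}{dt} \notin k(t,g)$, and $V = k(t,g) \cap k[[t]]$. Suppose $\delta \in D^1_k(V)$ is a $k$-linear differential operator of order at most one on $V$, written (via the completion $\widehat{V} = k[[t]]$) as $\delta = f_0 + f_1 \frac{d}{dt}$ with $f_0, f_1 \in k[[t]]$. Then $f_0 = \delta(1) \in V$, $f_1 = (\delta - f_0)(t) \in V$, and $f_1 \frac{dg}{dt} = (\delta - f_0)(g) \in V$; consequently $f_1 = 0$ and $\delta$ is multiplication by $f_0 \in V$. -/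
open PowerSeries IntermediateField

/-- The constants `k` lie in `V`. -/
theorem const_mem_Vring (k : Type*) [Field k] (g : PowerSeries k) (c : k) :
    algebraMap k (LaurentSeries k) c ∈ Vring k g := by
  exact ⟨IntermediateField.algebraMap_mem _ c, ⟨algebraMap k (PowerSeries k) c, rfl⟩⟩

/-- let `g ∈ k[[t]]` with `g(0)=0` and `dg/dt ∉ k(t,g)`, and
`V = k(t,g) ∩ k[[t]]`.  If `δ` is a `k`-linear differential operator of order at most one
on `V`, written via the completion `V̂ = k[[t]]` as `δ = f₀ + f₁ d/dt` with
`f₀, f₁ ∈ k[[t]]`, then `f₀ ∈ V`, `f₁ ∈ V`, `f₁·(dg/dt) ∈ V`, and consequently `f₁ = 0`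
and `δ` is multiplication by `f₀ ∈ V`. -/
theorem stmt16 {k : Type*} [Field k] (g : PowerSeries k)
    (hg0 : PowerSeries.constantCoeff g = 0)
    (hder : ((PowerSeries.derivative k g : PowerSeries k) : LaurentSeries k) ∉
      IntermediateField.adjoin k
        {((PowerSeries.X : PowerSeries k) : LaurentSeries k), (g : LaurentSeries k)})
    (δ : Vring k g → Vring k g)
    (hadd : ∀ x y, δ (x + y) = δ x + δ y)
    (hk : ∀ (c : k) (x : Vring k g),
      δ ((⟨algebraMap k (LaurentSeries k) c, const_mem_Vring k g c⟩ : Vring k g) * x) =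
        (⟨algebraMap k (LaurentSeries k) c, const_mem_Vring k g c⟩ : Vring k g) * δ x)
    (hord : IsDiffOp (Vring k g) 1 δ)
    (f0 f1 : PowerSeries k)
    (hrep : ∀ (x : Vring k g) (P : PowerSeries k),
      HahnSeries.ofPowerSeries ℤ k P = (x : LaurentSeries k) →
      ((δ x : Vring k g) : LaurentSeries k) =
        HahnSeries.ofPowerSeries ℤ k (f0 * P + f1 * PowerSeries.derivative k P)) :
    HahnSeries.ofPowerSeries ℤ k f0 ∈ Vring k g ∧
    HahnSeries.ofPowerSeries ℤ k f1 ∈ Vring k g ∧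
    HahnSeries.ofPowerSeries ℤ k (f1 * PowerSeries.derivative k g) ∈ Vring k g ∧
    f1 = 0 ∧
    ∀ x : Vring k g,
      ((δ x : Vring k g) : LaurentSeries k) =
        HahnSeries.ofPowerSeries ℤ k f0 * (x : LaurentSeries k) := by
    classical
  set Φ := HahnSeries.ofPowerSeries ℤ k with hΦ
  set F := IntermediateField.adjoin k
      {((PowerSeries.X : PowerSeries k) : LaurentSeries k), (g : LaurentSeries k)} with hF
  have memV : ∀ x : LaurentSeries k, x ∈ Vring k g ↔ x ∈ F ∧ x ∈ Φ.range := by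
    intro x; rfl
  have hXmem : ((PowerSeries.X : PowerSeries k) : LaurentSeries k) ∈ Vring k g := by
    refine (memV _).mpr ⟨IntermediateField.subset_adjoin _ _ (by simp), ⟨PowerSeries.X, rfl⟩⟩
  have hgmem : ((g : PowerSeries k) : LaurentSeries k) ∈ Vring k g := by
    refine (memV _).mpr ⟨IntermediateField.subset_adjoin _ _ (by simp), ⟨g, rfl⟩⟩
  set tV : Vring k g := ⟨_, hXmem⟩ with htV
  set gV : Vring k g := ⟨_, hgmem⟩ with hgV
  -- f0 ∈ V
  have h1 : ((δ 1 : Vring k g) : LaurentSeries k) = Φ f0 := by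
    have := hrep 1 1 (by simp)
    simpa using this
  have hf0 : Φ f0 ∈ Vring k g := h1 ▸ (δ 1).2
  -- f1 ∈ V
  have ht : ((δ tV : Vring k g) : LaurentSeries k) = Φ f0 * Φ PowerSeries.X + Φ f1 := by
    have := hrep tV PowerSeries.X rfl
    rw [this]
    simp [PowerSeries.derivative_X, map_add, map_mul]
  have hf1 : Φ f1 ∈ Vring k g := by
    have : Φ f1 = ((δ tV : Vring k g) : LaurentSeries k) - Φ f0 * Φ PowerSeries.X := by
      rw [ht]; ring
    rw [this]
    exact sub_mem (δ tV).2 (mul_mem hf0 hXmem)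
  -- f1 * g' ∈ V
  have hgd : Φ (f1 * PowerSeries.derivative k g) ∈ Vring k g := by
    have h := hrep gV g rfl
    have : Φ (f1 * PowerSeries.derivative k g) =
        ((δ gV : Vring k g) : LaurentSeries k) - Φ f0 * Φ g := by
      rw [h]; push_cast [map_add, map_mul]; ring
    rw [this]
    exact sub_mem (δ gV).2 (mul_mem hf0 hgmem)
  -- f1 = 0
  have hf1z : f1 = 0 := by
    by_contra hne
    apply hder
    have hΦne : Φ f1 ≠ 0 := by
      intro h
      apply hne
      apply HahnSeries.ofPowerSeries_injective (R := k) (Γ := ℤ)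
      rw [map_zero]; exact h
    have hf1F : Φ f1 ∈ F := ((memV _).mp hf1).1
    have hgdF : Φ (f1 * PowerSeries.derivative k g) ∈ F := ((memV _).mp hgd).1
    have key : ((PowerSeries.derivative k g : PowerSeries k) : LaurentSeries k) =
        (Φ f1)⁻¹ * Φ (f1 * PowerSeries.derivative k g) := by
      rw [map_mul, ← mul_assoc, inv_mul_cancel₀ hΦne, one_mul]
    rw [key]
    exact mul_mem (inv_mem hf1F) hgdF
  refine ⟨hf0, hf1, hgd, hf1z, ?_⟩
  intro x
  obtain ⟨P, hP⟩ := ((memV _).mp x.2).2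
  rw [hrep x P hP, hf1z]
  simp [map_mul, hP]
end

section
/- Let $R$ be a commutative ring of prime characteristic $p$, and suppose that for all $e \in \mathbb{N}$ the natural inclusion $R \hookrightarrow \mathrm{End}_R(F^e_* R)$ is an isomorphism, where $F^e_* R$ is $R$ viewed as a module over itself via the $e$-th Frobenius $r \mapsto r^{p^e}$. If $R$ is a domain of positive dimension, then $F^e_* R$ is an indecomposable $R$-module for every $e$. -/
/-!
If `F^e_* R = M ⊕ N`, the projection onto `M` along `N` is an `R`-linear endomorphism of
`F^e_* R`, hence multiplication by some `v ∈ R`. It kills a nonzero element of `N`, so `v = 0`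
because `R` is a domain; but it fixes every element of `M`, so `M = 0`.
-/

theorem Submodule.projection_map_of_mapsTo {A E : Type*} [Ring A] [AddCommGroup E] [Module A E]
    {p q : Submodule A E} (hpq : IsCompl p q) (g : E →+ E) (hp : ∀ x ∈ p, g x ∈ p)
    (hq : ∀ x ∈ q, g x ∈ q) (x : E) :
    p.projection q hpq (g x) = g (p.projection q hpq x) := by
  conv_lhs => rw [← projection_add_projection_eq_self hpq x, map_add, map_add]
  rw [projection_apply_of_mem_left hpq (hp _ (projection_apply_mem hpq x)),
    projection_apply_of_mem_right hpq (hq _ (projection_apply_mem hpq.symm x)), add_zero]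

theorem AddSubgroup.eq_bot_or_eq_bot_of_isCompl {R : Type*} [Ring R] [NoZeroDivisors R]
    (T : Set R) {M N : AddSubgroup R} (hMN : IsCompl M N)
    (hM : ∀ t ∈ T, ∀ x ∈ M, t * x ∈ M) (hN : ∀ t ∈ T, ∀ x ∈ N, t * x ∈ N)
    (hend : ∀ φ : R →+ R, (∀ t ∈ T, ∀ x, φ (t * x) = t * φ x) → ∃ v, ∀ x, φ x = v * x) :
    M = ⊥ ∨ N = ⊥ := by
  have hMN' := AddSubgroup.toIntSubmodule.isCompl hMN
  set π := M.toIntSubmodule.projection N.toIntSubmodule hMN'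
  obtain ⟨v, hv⟩ := hend π.toAddMonoidHom fun t ht x =>
    Submodule.projection_map_of_mapsTo hMN' (AddMonoidHom.mulLeft t) (hM t ht) (hN t ht) x
  obtain hN0 | ⟨n, hn, hn0⟩ := N.bot_or_exists_ne_zero
  · exact Or.inr hN0
  have hv0 : v = 0 := by
    have hvn : v * n = 0 := (hv n).symm.trans (Submodule.projection_apply_of_mem_right hMN' hn)
    exact (mul_eq_zero.1 hvn).resolve_right hn0
  refine Or.inl (M.eq_bot_iff_forall.2 fun m hm => ?_)
  have hπm : π m = m := Submodule.projection_apply_of_mem_left hMN' hm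
  simpa [hv0, hπm] using hv m

theorem stmt18_general {R : Type*} [CommRing R] [IsDomain R] (p : ℕ)
    (hend : ∀ e : ℕ, ∀ φ : R → R,
      (∀ x y, φ (x + y) = φ x + φ y) →
      (∀ r x : R, φ (r ^ p ^ e * x) = r ^ p ^ e * φ x) →
      ∃ v : R, ∀ x, φ x = v * x) :
    ∀ e : ℕ, ¬∃ M N : AddSubgroup R,
      (∀ r : R, ∀ x ∈ M, r ^ p ^ e * x ∈ M) ∧
      (∀ r : R, ∀ x ∈ N, r ^ p ^ e * x ∈ N) ∧
      M ≠ ⊥ ∧ N ≠ ⊥ ∧ M ⊓ N = ⊥ ∧ M ⊔ N = ⊤ := by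
  rintro e ⟨M, N, hM, hN, hM0, hN0, hinf, hsup⟩
  have := AddSubgroup.eq_bot_or_eq_bot_of_isCompl (Set.range fun r : R => r ^ p ^ e)
    ⟨disjoint_iff.2 hinf, codisjoint_iff.2 hsup⟩ (Set.forall_mem_range.2 hM)
    (Set.forall_mem_range.2 hN) fun φ hφ => hend e φ (map_add φ) (Set.forall_mem_range.1 hφ)
  tauto

/-- let `R` be a domain of characteristic `p` and positive dimension such
that for every `e` each `R`-linear endomorphism of `F^e_* R` (i.e. each additive map
`φ : R → R` with `φ(r^{p^e} x) = r^{p^e} φ(x)`) is multiplication by an element of `R`.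
Then `F^e_* R` is indecomposable for every `e`: there is no decomposition of `R` into two
nonzero additive subgroups stable under the `F^e_* R`-module structure. -/
theorem stmt18 {R : Type*} [CommRing R] [IsDomain R] (p : ℕ) [Fact p.Prime] [CharP R p]
    (hdim : 0 < ringKrullDim R)
    (hend : ∀ e : ℕ, ∀ φ : R → R,
      (∀ x y, φ (x + y) = φ x + φ y) →
      (∀ r x : R, φ (r ^ p ^ e * x) = r ^ p ^ e * φ x) →
      ∃ v : R, ∀ x, φ x = v * x) :
    ∀ e : ℕ, ¬∃ M N : AddSubgroup R,
      (∀ r : R, ∀ x ∈ M, r ^ p ^ e * x ∈ M) ∧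
      (∀ r : R, ∀ x ∈ N, r ^ p ^ e * x ∈ N) ∧
      M ≠ ⊥ ∧ N ≠ ⊥ ∧ M ⊓ N = ⊥ ∧ M ⊔ N = ⊤ :=
  stmt18_general p hend
end
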